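/- Let E and F be quasi closed subsets of Ω such that cap(E ∩ A) ≤ cap(F ∩ A) for every open set A ⊆ Ω. Then cap(E ∖ F) = 0, i.e. E is quasi contained in F. -/
import Mathlib


/-
Common definitions for formalizing
"Stability results for solutions of obstacle problems with measure data"
by P. Dall'Aglio.

We work on Ω ⊆ ℝ^N.  Capacity, quasi-(semi)continuity, Sobolev spaces via weak
derivatives, bounded (signed Radon) measures, Stampacchia duality solutions,
and the obstacle problem OP(μ,ψ) are defined below.
-/

open MeasureTheory Filter Set
open scoped ENNReal Topology BigOperators

noncomputable section

namespace Obstacle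

abbrev Euc (N : ℕ) : Type := EuclideanSpace ℝ (Fin N)

variable {N : ℕ}

/-- C^∞ functions with compact support contained in Ω. -/
def TestFun (Ω : Set (Euc N)) (φ : Euc N → ℝ) : Prop :=
  ContDiff ℝ (⊤ : ℕ∞) φ ∧ HasCompactSupport φ ∧ tsupport φ ⊆ Ω

/-- `du` is the weak (distributional) differential of `u` on `Ω`. -/
def HasWeakFDeriv (Ω : Set (Euc N)) (u : Euc N → ℝ) (du : Euc N → Euc N →L[ℝ] ℝ) : Prop :=
  ∀ φ, TestFun Ω φ → ∀ v : Euc N,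
    ∫ x in Ω, u x * fderiv ℝ φ x v = - ∫ x in Ω, du x v * φ x

/-- The (L^p of the function plus L^p of the gradient) norm of a pair `(u, du)`. -/
def sobNormAux (Ω : Set (Euc N)) (p : ℝ≥0∞) (u : Euc N → ℝ)
    (du : Euc N → Euc N →L[ℝ] ℝ) : ℝ≥0∞ :=
  eLpNorm u p (volume.restrict Ω) + eLpNorm (fun x => ‖du x‖) p (volume.restrict Ω)

/-- Membership in the Sobolev space W^{1,p}(Ω). -/
def MemSobolev (Ω : Set (Euc N)) (p : ℝ≥0∞) (u : Euc N → ℝ) : Prop :=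
  ∃ du, HasWeakFDeriv Ω u du ∧ sobNormAux Ω p u du < ⊤

/-- Membership in W^{1,p}₀(Ω): a Sobolev function approximable in the W^{1,p}
norm by test functions. -/
def MemSobolev0 (Ω : Set (Euc N)) (p : ℝ≥0∞) (u : Euc N → ℝ) : Prop :=
  ∃ du, HasWeakFDeriv Ω u du ∧ sobNormAux Ω p u du < ⊤ ∧
    ∀ ε : ℝ≥0∞, 0 < ε → ∃ φ, TestFun Ω φ ∧
      sobNormAux Ω p (fun x => u x - φ x) (fun x => du x - fderiv ℝ φ x) < ε

/-- The W^{1,p}(Ω) norm of a function (via its a.e. unique weak differential). -/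
def sobNorm (Ω : Set (Euc N)) (p : ℝ≥0∞) (u : Euc N → ℝ) : ℝ≥0∞ :=
  ⨅ du ∈ {du | HasWeakFDeriv Ω u du}, sobNormAux Ω p u du

/-- `vn → 0` strongly in W^{1,p}₀(Ω). -/
def TendstoZeroSob0 (Ω : Set (Euc N)) (p : ℝ≥0∞) (vn : ℕ → Euc N → ℝ) : Prop :=
  (∀ n, MemSobolev0 Ω p (vn n)) ∧ Tendsto (fun n => sobNorm Ω p (vn n)) atTop (nhds 0)

/-- `un → u` strongly in W^{1,p}₀(Ω). -/
def TendstoSob0 (Ω : Set (Euc N)) (p : ℝ≥0∞) (un : ℕ → Euc N → ℝ) (u : Euc N → ℝ) : Prop :=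
  (∀ n, MemSobolev0 Ω p (un n)) ∧ MemSobolev0 Ω p u ∧
    Tendsto (fun n => sobNorm Ω p (fun x => un n x - u x)) atTop (nhds 0)

/-- The squared H¹(Ω) norm of a pair `(u, du)`. -/
def h1sq (Ω : Set (Euc N)) (u : Euc N → ℝ) (du : Euc N → Euc N →L[ℝ] ℝ) : ℝ :=
  (∫ x in Ω, (u x) ^ 2) + ∫ x in Ω, ‖du x‖ ^ 2

/-- The (harmonic) capacity of a set `A` relative to `Ω`:
cap(A) = inf{‖z‖²_{H¹(Ω)} : z ∈ H¹₀(Ω), z ≥ 1 a.e. in a neighbourhood of A}. -/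
def capacity (Ω A : Set (Euc N)) : ℝ≥0∞ :=
  ⨅ z ∈ {z : (Euc N → ℝ) × (Euc N → Euc N →L[ℝ] ℝ) |
      HasWeakFDeriv Ω z.1 z.2 ∧ MemSobolev0 Ω 2 z.1 ∧
      ∃ U : Set (Euc N), IsOpen U ∧ A ⊆ U ∧ ∀ᵐ x ∂volume, x ∈ U → 1 ≤ z.1 x},
    ENNReal.ofReal (h1sq Ω z.1 z.2)

/-- The property `P` holds quasi everywhere (outside a set of capacity zero) in `Ω`. -/
def QEOn (Ω : Set (Euc N)) (P : Euc N → Prop) : Prop :=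
  capacity Ω {x ∈ Ω | ¬ P x} = 0

/-- `v` is quasi continuous on `Ω`. -/
def QuasiContinuousOn {α : Type*} [TopologicalSpace α] (Ω : Set (Euc N)) (v : Euc N → α) :
    Prop :=
  ∀ ε : ℝ≥0∞, 0 < ε → ∃ E : Set (Euc N), capacity Ω E < ε ∧ ContinuousOn v (Ω \ E)

/-- `v` is quasi upper semicontinuous on `Ω`. -/
def QuasiUSCOn (Ω : Set (Euc N)) (v : Euc N → EReal) : Prop :=
  ∀ ε : ℝ≥0∞, 0 < ε → ∃ E : Set (Euc N), capacity Ω E < ε ∧ UpperSemicontinuousOn v (Ω \ E)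

/-- `A` is quasi closed in `Ω`. -/
def QuasiClosedIn (Ω A : Set (Euc N)) : Prop :=
  ∀ ε : ℝ≥0∞, 0 < ε → ∃ V : Set (Euc N), IsClosed V ∧ capacity Ω (symmDiff A V) < ε

/-- `B ⊂⊂ B'`: `B` is compactly contained in `B'`. -/
def CpctIn (B B' : Set (Euc N)) : Prop :=
  IsCompact (closure B) ∧ closure B ⊆ B'

/-- Convergence of obstacles in the sense of level sets. -/
def LevConv (Ω : Set (Euc N)) (ψn : ℕ → Euc N → EReal) (ψ : Euc N → EReal) : Prop :=
  ∀ s t : ℝ, s < t → ∀ B B' : Set (Euc N), CpctIn B B' → CpctIn B' Ω →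
    capacity Ω ({x | (t : EReal) < ψ x} ∩ B) ≤
      Filter.liminf (fun n => capacity Ω ({x | (s : EReal) < ψn n x} ∩ B')) atTop ∧
    Filter.limsup (fun n => capacity Ω ({x | (t : EReal) < ψn n x} ∩ B)) atTop ≤
      capacity Ω ({x | (s : EReal) < ψ x} ∩ B')

/-- The total-variation norm of a bounded signed measure. -/
def mnorm (μ : SignedMeasure (Euc N)) : ℝ≥0∞ := μ.totalVariation Set.univ

/-- `μ` is a (bounded Radon) measure on `Ω`, i.e. concentrated on `Ω`. -/
def OnSet (Ω : Set (Euc N)) (μ : SignedMeasure (Euc N)) : Prop :=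
  μ.totalVariation Ωᶜ = 0

/-- The integral of `f` with respect to a signed measure. -/
def sintegral (μ : SignedMeasure (Euc N)) (f : Euc N → ℝ) : ℝ :=
  (∫ x, f x ∂(μ.toJordanDecomposition.posPart)) -
    ∫ x, f x ∂(μ.toJordanDecomposition.negPart)

/-- A signed measure belongs to H⁻¹(Ω) (the dual of H¹₀(Ω)). -/
def MemHminus1 (Ω : Set (Euc N)) (μ : SignedMeasure (Euc N)) : Prop :=
  ∃ C : ℝ, ∀ φ, TestFun Ω φ → |sintegral μ φ| ≤ C * (sobNorm Ω 2 φ).toReal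

/-- A (nonnegative) measure belongs to H⁻¹(Ω). -/
def MeasureMemHminus1 (Ω : Set (Euc N)) (m : Measure (Euc N)) : Prop :=
  ∃ C : ℝ, ∀ φ, TestFun Ω φ → |∫ x, φ x ∂m| ≤ C * (sobNorm Ω 2 φ).toReal

/-- A measure vanishes on all sets of capacity zero (membership in ℳ⁰_b(Ω)). -/
def VanishesOnCapZero (Ω : Set (Euc N)) (m : Measure (Euc N)) : Prop :=
  ∀ S : Set (Euc N), MeasurableSet S → capacity Ω S = 0 → m S = 0

/-- A linear elliptic operator 𝒜u = −div(A(x)∇u) in divergence form with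
bounded measurable coefficients and ellipticity constant γ > 0. -/
structure EllipticOp (Ω : Set (Euc N)) where
  A : Euc N → Fin N → Fin N → ℝ
  meas : ∀ i j, Measurable fun x => A x i j
  bdd : ∀ i j, ∃ C : ℝ, ∀ᵐ x ∂(volume.restrict Ω), |A x i j| ≤ C
  ellipticityConst : ℝ
  ellipticityConst_pos : 0 < ellipticityConst
  elliptic : ∀ᵐ x ∂(volume.restrict Ω), ∀ ξ : Fin N → ℝ,
    ellipticityConst * ∑ i, ξ i ^ 2 ≤ ∑ i, ∑ j, A x i j * ξ i * ξ j

/-- `w` is the variational solution of the adjoint equation 𝒜*w = g, w ∈ H¹₀(Ω). -/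
def IsVarSolAdjoint {Ω : Set (Euc N)} (L : EllipticOp Ω) (g w : Euc N → ℝ) : Prop :=
  ∃ dw, HasWeakFDeriv Ω w dw ∧ MemSobolev0 Ω 2 w ∧
    ∀ φ, TestFun Ω φ →
      (∫ x in Ω, ∑ i, ∑ j, L.A x j i * dw x (EuclideanSpace.single j 1) *
        fderiv ℝ φ x (EuclideanSpace.single i 1)) = ∫ x in Ω, g x * φ x

/-- `u` is the Stampacchia (duality) solution of 𝒜u = μ in Ω, u = 0 on ∂Ω:
∫_Ω u g dx = ∫_Ω u*_g dμ for every g ∈ L^∞(Ω), u*_g the variational solution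
of the adjoint problem. -/
def IsStampSol {Ω : Set (Euc N)} (L : EllipticOp Ω) (μ : SignedMeasure (Euc N))
    (u : Euc N → ℝ) : Prop :=
  IntegrableOn u Ω volume ∧
    ∀ g : Euc N → ℝ, Measurable g → (∃ C, ∀ x, |g x| ≤ C) →
      ∀ w, IsVarSolAdjoint L g w → ∫ x in Ω, u x * g x = sintegral μ w

/-- `usol` assigns to every bounded measure μ the quasi continuous representative
of the Stampacchia solution u_μ; moreover u_μ ∈ W^{1,q}₀(Ω) for 1 < q < N/(N−1). -/
def IsSolOp {Ω : Set (Euc N)} (L : EllipticOp Ω)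
    (usol : SignedMeasure (Euc N) → Euc N → ℝ) : Prop :=
  ∀ μ, IsStampSol L μ (usol μ) ∧ QuasiContinuousOn Ω (usol μ) ∧
    ∀ q : ℝ, 1 < q → q < (N : ℝ) / ((N : ℝ) - 1) →
      MemSobolev0 Ω (ENNReal.ofReal q) (usol μ)

/-- `u` is the solution of the obstacle problem OP(μ,ψ): `u` is quasi continuous,
`u ≥ ψ` q.e. in Ω, `u = u_μ + u_λ` for some nonnegative bounded measure λ, and
`u` is the smallest function with these properties. -/
def IsOPSol (Ω : Set (Euc N)) (usol : SignedMeasure (Euc N) → Euc N → ℝ)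
    (μ : SignedMeasure (Euc N)) (ψ : Euc N → EReal) (u : Euc N → ℝ) : Prop :=
  QuasiContinuousOn Ω u ∧ QEOn Ω (fun x => ψ x ≤ (u x : EReal)) ∧
  (∃ lam : SignedMeasure (Euc N), 0 ≤ lam ∧ OnSet Ω lam ∧
    u = fun x => usol μ x + usol lam x) ∧
  ∀ ν : SignedMeasure (Euc N), 0 ≤ ν → OnSet Ω ν →
    QEOn Ω (fun x => ψ x ≤ ((usol μ x + usol ν x : ℝ) : EReal)) →
    ∀ᵐ x ∂(volume.restrict Ω), u x ≤ usol μ x + usol ν x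

/-- The obstacle `ψ` is OP-admissible: ψ ≤ u_ρ q.e. in Ω for some ρ ∈ ℳ_b(Ω). -/
def OPAdmissible (Ω : Set (Euc N)) (usol : SignedMeasure (Euc N) → Euc N → ℝ)
    (ψ : Euc N → EReal) : Prop :=
  ∃ ρ : SignedMeasure (Euc N), OnSet Ω ρ ∧ QEOn Ω fun x => ψ x ≤ (usol ρ x : EReal)

/-- `w = u^g₀`: 𝒜w = 0 in H⁻¹(Ω) and w − g ∈ H¹₀(Ω). -/
def IsHarmonicLift (Ω : Set (Euc N)) (L : EllipticOp Ω) (g w : Euc N → ℝ) : Prop :=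
  ∃ dw, HasWeakFDeriv Ω w dw ∧ MemSobolev Ω 2 w ∧
    MemSobolev0 Ω 2 (fun x => w x - g x) ∧
    ∀ φ, TestFun Ω φ →
      (∫ x in Ω, ∑ i, ∑ j, L.A x i j * dw x (EuclideanSpace.single j 1) *
        fderiv ℝ φ x (EuclideanSpace.single i 1)) = 0

/-- ℱ^g_ψ(μ): functions of the form u_μ + u^g₀ + u_ν, ν ∈ ℳ⁺_b(Ω), above ψ q.e. -/
def Fset (Ω : Set (Euc N)) (usol : SignedMeasure (Euc N) → Euc N → ℝ)
    (ug0 : Euc N → ℝ) (μ : SignedMeasure (Euc N)) (ψ : Euc N → EReal) :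
    Set (Euc N → ℝ) :=
  {v | (∃ ν : SignedMeasure (Euc N), 0 ≤ ν ∧ OnSet Ω ν ∧
      v = fun x => usol μ x + ug0 x + usol ν x) ∧
    QEOn Ω fun x => ψ x ≤ (v x : EReal)}

/-- 𝒢^g_ψ(μ): functions above ψ q.e. of the form u_μ + u^h₀ + u_ν with ν ∈ ℳ⁺_b(Ω),
h ∈ H¹(Ω) and (h − g)⁻ ∈ H¹₀(Ω) (i.e. h ≥ g on ∂Ω). -/
def Gset (Ω : Set (Euc N)) (L : EllipticOp Ω)
    (usol : SignedMeasure (Euc N) → Euc N → ℝ) (g : Euc N → ℝ)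
    (μ : SignedMeasure (Euc N)) (ψ : Euc N → EReal) : Set (Euc N → ℝ) :=
  {v | QEOn Ω (fun x => ψ x ≤ (v x : EReal)) ∧
    ∃ (ν : SignedMeasure (Euc N)) (h uh0 : Euc N → ℝ), 0 ≤ ν ∧ OnSet Ω ν ∧
      MemSobolev Ω 2 h ∧ IsHarmonicLift Ω L h uh0 ∧
      MemSobolev0 Ω 2 (fun x => max (g x - h x) 0) ∧
      v = fun x => usol μ x + uh0 x + usol ν x}

/-- The canonical monotone extension of a continuous nondecreasing Φ : ℝ → ℝ to ℝ̄. -/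
def erealExtend (Φ : ℝ → ℝ) (y : EReal) : EReal :=
  ⨆ t ∈ {t : ℝ | (t : EReal) ≤ y}, (Φ t : EReal)

end Obstacle

namespace Obstacle

lemma capacity_mono {N : ℕ} (Ω : Set (Euc N)) {A B : Set (Euc N)} (hAB : A ⊆ B) :
    capacity Ω A ≤ capacity Ω B := by
  apply biInf_mono
  rintro z ⟨h1, h2, U, hU, hBU, hae⟩
  exact ⟨h1, h2, U, hU, hAB.trans hBU, hae⟩

/-- if E, F are quasi closed subsets of Ω and cap(E ∩ A) ≤ cap(F ∩ A)
for every open A ⊆ Ω, then cap(E ∖ F) = 0 (E is quasi contained in F). -/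
theorem statement5 (N : ℕ) (hN : 1 ≤ N) (Ω : Set (Euc N)) (hΩo : IsOpen Ω)
    (hΩb : Bornology.IsBounded Ω) (E F : Set (Euc N)) (hEΩ : E ⊆ Ω) (hFΩ : F ⊆ Ω)
    (hqE : QuasiClosedIn Ω E) (hqF : QuasiClosedIn Ω F)
    (h : ∀ A : Set (Euc N), A ⊆ Ω → IsOpen A →
      capacity Ω (E ∩ A) ≤ capacity Ω (F ∩ A)) :
    capacity Ω (E \ F) = 0 := by
  by_contra hne
  have hpos : 0 < capacity Ω (E \ F) := pos_iff_ne_zero.mpr hne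
  obtain ⟨V, hVc, hVcap⟩ := hqF _ hpos
  have hex : ∃ z : (Euc N → ℝ) × (Euc N → Euc N →L[ℝ] ℝ),
      (HasWeakFDeriv Ω z.1 z.2 ∧ MemSobolev0 Ω 2 z.1 ∧
        ∃ U : Set (Euc N), IsOpen U ∧ symmDiff F V ⊆ U ∧
          ∀ᵐ x ∂volume, x ∈ U → 1 ≤ z.1 x) ∧
      ENNReal.ofReal (h1sq Ω z.1 z.2) < capacity Ω (E \ F) := by
    simpa only [capacity, iInf_lt_iff, Set.mem_setOf_eq, exists_prop] using hVcap
  obtain ⟨z, ⟨hzw, hz0, U, hUo, hUsub, hUae⟩, hzlt⟩ := hex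
  set A : Set (Euc N) := (Ω \ V) ∪ (U ∩ Ω) with hA
  have hAo : IsOpen A := (hΩo.sdiff hVc).union (hUo.inter hΩo)
  have hAΩ : A ⊆ Ω := by
    rintro x (hx | hx)
    · exact hx.1
    · exact hx.2
  have hEF : E \ F ⊆ E ∩ A := by
    rintro x ⟨hxE, hxF⟩
    refine ⟨hxE, ?_⟩
    by_cases hxV : x ∈ V
    · exact Or.inr ⟨hUsub (Or.inr ⟨hxV, hxF⟩), hEΩ hxE⟩
    · exact Or.inl ⟨hEΩ hxE, hxV⟩
  have hFA : F ∩ A ⊆ U := by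
    rintro x ⟨hxF, hx | hx⟩
    · exact hUsub (Or.inl ⟨hxF, hx.2⟩)
    · exact hx.1
  have h1 : capacity Ω (E \ F) ≤ capacity Ω (E ∩ A) := capacity_mono Ω hEF
  have h2 : capacity Ω (E ∩ A) ≤ capacity Ω (F ∩ A) := h A hAΩ hAo
  have h3 : capacity Ω (F ∩ A) ≤ ENNReal.ofReal (h1sq Ω z.1 z.2) := by
    apply iInf₂_le z
    exact ⟨hzw, hz0, U, hUo, hFA, hUae⟩
  exact absurd ((h1.trans (h2.trans h3)).trans_lt hzlt) (lt_irrefl _)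

end Obstacle
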